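/- Let n and k be positive integers with n ≥ 2k ≥ 4. Define c on the vertices of KG(n,k) by c(A) = 2·min(A) − 1 if min(A) ≤ n − 2k + 1, and c(A) = 2n − 4k + 2 otherwise. Then c is a local coloring (hence also a star-free coloring) of KG(n,k) with value 2n − 4k + 2; consequently χ_s(KG(n,k)) ≤ χ_l(KG(n,k)) ≤ 2n − 4k + 2. -/

import Mathlib

/-
Let `μ(A)` be the (`0`-based) minimum of `A` and `N = n - 2k`; the coloring sends `A` to
`2μ(A) + 1` if `μ(A) ≤ N` and to `2N + 2` otherwise. Only `2k - 1` points lie above `N`, so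
two disjoint `k`-sets never both have `μ > N`: the coloring is proper, and since distinct odd
colors differ by at least `2`, triangles are fine as well. The only consecutive colors are
`2N + 1` and `2N + 2`; a cherry `u - v - w` using just these has all three minima `≥ N`, and
then `u` and `w` are both the complement of `v` among the last `2k` points, so `u = w`.
-/

/-- The Kneser graph `KG(n,k)`: vertices are the `k`-element subsets of an
`n`-element set, two vertices being adjacent iff they are disjoint. -/
def kneserGraph (n k : ℕ) : SimpleGraph {A : Finset (Fin n) // A.card = k} where
  Adj A B := A ≠ B ∧ Disjoint (A : Finset (Fin n)) (B : Finset (Fin n))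
  symm := ⟨fun A B h => ⟨h.1.symm, h.2.symm⟩⟩
  loopless := ⟨fun A h => h.1 rfl⟩

/-- A star-free coloring: a proper coloring by positive integers such that no
path on three vertices is colored using only two consecutive integers. -/
def IsStarFreeColoring {V : Type*} (G : SimpleGraph V) (c : V → ℕ) : Prop :=
  (∀ v, 1 ≤ c v) ∧
  (∀ u v, G.Adj u v → c u ≠ c v) ∧
  (∀ v u w, u ≠ w → G.Adj v u → G.Adj v w →
    ¬ ∃ a : ℕ, ({c u, c v, c w} : Set ℕ) ⊆ {a, a + 1})

/-- The star-free chromatic number: the least positive integer `t` such that `G`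
admits a star-free coloring with colors in `{1, …, t}`. -/
noncomputable def starFreeChromaticNumber {V : Type*} (G : SimpleGraph V) : ℕ :=
  sInf {t : ℕ | 0 < t ∧ ∃ c : V → ℕ, IsStarFreeColoring G c ∧ ∀ v, c v ∈ Set.Icc 1 t}

/-- A local coloring: a proper coloring by positive integers such that no path on
three vertices is colored using only two consecutive integers and no triangle is
colored using only three consecutive integers. -/
def IsLocalColoring {V : Type*} (G : SimpleGraph V) (c : V → ℕ) : Prop :=
  IsStarFreeColoring G c ∧
  (∀ u v w, G.Adj u v → G.Adj v w → G.Adj u w →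
    ¬ ∃ a : ℕ, ({c u, c v, c w} : Set ℕ) ⊆ {a, a + 1, a + 2})

/-- The local chromatic number: the minimum value (maximum color used) over all
local colorings of `G`. -/
noncomputable def localChromaticNumber {V : Type*} (G : SimpleGraph V) : ℕ :=
  sInf {t : ℕ | 0 < t ∧ ∃ c : V → ℕ, IsLocalColoring G c ∧ ∀ v, c v ∈ Set.Icc 1 t}

/-- The coloring of `KG(n,k)` sending `A` to `2·min(A) − 1` when
`min(A) ≤ n − 2k + 1` (minima taken in the `1`-based ground set `{1, …, n}`)
and to `2n − 4k + 2` otherwise. -/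
noncomputable def kneserLocalColoring (n k : ℕ) :
    {A : Finset (Fin n) // A.card = k} → ℕ := fun A =>
  if sInf {m : ℕ | ∃ i ∈ (A : Finset (Fin n)), (i : ℕ) + 1 = m} ≤ n - 2 * k + 1 then
    2 * sInf {m : ℕ | ∃ i ∈ (A : Finset (Fin n)), (i : ℕ) + 1 = m} - 1
  else
    2 * n - 4 * k + 2

open Finset

theorem Fin.card_filter_le_val (n j : ℕ) : #{i : Fin n | j ≤ (i : ℕ)} = n - j := by
  have h := card_filter_add_card_filter_not (s := (univ : Finset (Fin n)))
    (fun i : Fin n => (i : ℕ) < j)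
  simp only [not_lt, card_univ, Fintype.card_fin, Fin.card_filter_val_lt] at h
  omega

theorem Finset.eq_sdiff_of_disjoint_of_card_le {α : Type*} [DecidableEq α] {s u v : Finset α}
    (hu : u ⊆ s) (hv : v ⊆ s) (hd : Disjoint u v) (hcard : #s ≤ #u + #v) : u = s \ v := by
  have hunion : u ∪ v = s :=
    eq_of_subset_of_card_le (union_subset hu hv) (by rwa [card_union_of_disjoint hd])
  rw [← hunion, union_sdiff_cancel_right hd]

section ChromaticNumbers

variable {V : Type*} {G : SimpleGraph V} {c : V → ℕ} {t : ℕ}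

theorem localChromaticNumber_le (hc : IsLocalColoring G c) (hct : ∀ v, c v ∈ Set.Icc 1 t)
    (ht : 0 < t) : localChromaticNumber G ≤ t :=
  Nat.sInf_le ⟨ht, c, hc, hct⟩

theorem starFreeChromaticNumber_le_localChromaticNumber (hc : IsLocalColoring G c)
    (hct : ∀ v, c v ∈ Set.Icc 1 t) (ht : 0 < t) :
    starFreeChromaticNumber G ≤ localChromaticNumber G :=
  csInf_le_csInf (OrderBot.bddBelow _) ⟨t, ht, c, hc, hct⟩
    fun _ ⟨hs, c', hc', hc't⟩ => ⟨hs, c', hc'.1, hc't⟩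

end ChromaticNumbers

def capColor (N m : ℕ) : ℕ := if m ≤ N then 2 * m + 1 else 2 * N + 2

theorem capColor_mem_Icc (N m : ℕ) : capColor N m ∈ Set.Icc 1 (2 * N + 2) := by
  unfold capColor; split_ifs <;> constructor <;> omega

theorem capColor_of_lt {N m : ℕ} (h : N < m) : capColor N m = 2 * N + 2 := by
  simp [capColor, not_le.mpr h]

/-- The only consecutive colors are `2N + 1` and `2N + 2`, so a cherry colored by two consecutive
integers has all three values `≥ N`. -/
theorem isLocalColoring_capColor_comp {V : Type*} {G : SimpleGraph V} {μ : V → ℕ} {N : ℕ}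
    (hne : ∀ u v, G.Adj u v → μ u ≠ μ v)
    (hle : ∀ u v, G.Adj u v → μ u ≤ N ∨ μ v ≤ N)
    (hlt : ∀ v u w, u ≠ w → G.Adj v u → G.Adj v w → μ u < N ∨ μ v < N ∨ μ w < N) :
    IsLocalColoring G (capColor N ∘ μ) := by
  have proper : ∀ u v, G.Adj u v → capColor N (μ u) ≠ capColor N (μ v) := by
    intro u v huv
    have := hne u v huv
    have := hle u v huv
    unfold capColor; split_ifs <;> omega
  refine ⟨⟨fun v => (capColor_mem_Icc N (μ v)).1, proper, ?_⟩, ?_⟩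
  · rintro v u w huw hvu hvw ⟨a, hsub⟩
    simp only [Function.comp, Set.insert_subset_iff, Set.singleton_subset_iff,
      Set.mem_insert_iff, Set.mem_singleton_iff] at hsub
    have := proper v u hvu
    have := proper v w hvw
    have := hlt v u w huw hvu hvw
    unfold capColor at *; split_ifs at * <;> omega
  · rintro u v w huv hvw huw ⟨a, hsub⟩
    simp only [Function.comp, Set.insert_subset_iff, Set.singleton_subset_iff,
      Set.mem_insert_iff, Set.mem_singleton_iff] at hsub
    have := proper u v huv
    have := proper v w hvw
    have := proper u w huw
    unfold capColor at *; split_ifs at * <;> omega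

namespace kneserGraph

variable {n k : ℕ}

def minElem (hk : 0 < k) (A : {A : Finset (Fin n) // A.card = k}) : Fin n :=
  (A : Finset (Fin n)).min' (card_pos.mp (by rw [A.2]; exact hk))

variable (hk : 0 < k)

theorem minElem_mem (A : {A : Finset (Fin n) // A.card = k}) :
    minElem hk A ∈ (A : Finset (Fin n)) :=
  min'_mem _ _

theorem subset_filter_of_le_minElem {A : {A : Finset (Fin n) // A.card = k}} {j : ℕ}
    (h : j ≤ minElem hk A) :
    (A : Finset (Fin n)) ⊆ ({i | j ≤ (i : ℕ)} : Finset (Fin n)) := fun i hi =>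
  mem_filter.mpr ⟨mem_univ i, h.trans (Fin.le_def.mp (min'_le _ i hi))⟩

theorem minElem_ne_of_adj {u v : {A : Finset (Fin n) // A.card = k}}
    (huv : (kneserGraph n k).Adj u v) : (minElem hk u : ℕ) ≠ minElem hk v := fun h =>
  disjoint_left.mp huv.2 (minElem_mem hk u) (Fin.ext h ▸ minElem_mem hk v)

theorem minElem_le_or_le_of_adj {u v : {A : Finset (Fin n) // A.card = k}}
    (huv : (kneserGraph n k).Adj u v) :
    (minElem hk u : ℕ) ≤ n - 2 * k ∨ (minElem hk v : ℕ) ≤ n - 2 * k := by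
  by_contra! h
  have hsub := union_subset (subset_filter_of_le_minElem hk (Nat.succ_le_of_lt h.1))
    (subset_filter_of_le_minElem hk (Nat.succ_le_of_lt h.2))
  have hcard := card_le_card hsub
  rw [card_union_of_disjoint huv.2, u.2, v.2, Fin.card_filter_le_val] at hcard
  omega

theorem minElem_lt_of_adj_of_adj {v u w : {A : Finset (Fin n) // A.card = k}} (huw : u ≠ w)
    (hvu : (kneserGraph n k).Adj v u) (hvw : (kneserGraph n k).Adj v w) :
    (minElem hk u : ℕ) < n - 2 * k ∨ (minElem hk v : ℕ) < n - 2 * k ∨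
      (minElem hk w : ℕ) < n - 2 * k := by
  by_contra! h
  obtain ⟨hu, hv, hw⟩ := h
  have hcard : #{i : Fin n | n - 2 * k ≤ (i : ℕ)} ≤ 2 * k := by
    rw [Fin.card_filter_le_val]; omega
  have hv' := subset_filter_of_le_minElem hk hv
  refine huw (Subtype.ext ?_)
  rw [eq_sdiff_of_disjoint_of_card_le (subset_filter_of_le_minElem hk hu) hv' hvu.2.symm
      (by rw [u.2, v.2]; omega),
    eq_sdiff_of_disjoint_of_card_le (subset_filter_of_le_minElem hk hw) hv' hvw.2.symm
      (by rw [w.2, v.2]; omega)]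

theorem exists_lt_minElem (hnk : 2 * k ≤ n) :
    ∃ A : {A : Finset (Fin n) // A.card = k}, n - 2 * k < minElem hk A := by
  obtain ⟨A, hA, hcard⟩ :=
    exists_subset_card_eq (s := {i : Fin n | n - 2 * k + 1 ≤ (i : ℕ)}) (n := k)
      (by rw [Fin.card_filter_le_val]; omega)
  exact ⟨⟨A, hcard⟩, (mem_filter.mp (hA (minElem_mem hk ⟨A, hcard⟩))).2⟩

end kneserGraph

/-- `kneserLocalColoring` is phrased through the `1`-based minimum `minElem + 1`. -/
theorem kneserLocalColoring_eq_capColor_comp {n k : ℕ} (hk : 0 < k) :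
    kneserLocalColoring n k =
      capColor (n - 2 * k) ∘ fun A => (kneserGraph.minElem hk A : ℕ) := by
  funext A
  have hleast : IsLeast {m : ℕ | ∃ i ∈ (A : Finset (Fin n)), (i : ℕ) + 1 = m}
      ((kneserGraph.minElem hk A : ℕ) + 1) :=
    ⟨⟨_, kneserGraph.minElem_mem hk A, rfl⟩, by
      rintro _ ⟨i, hi, rfl⟩
      exact Nat.succ_le_succ (Fin.le_def.mp (min'_le _ i hi))⟩
  simp only [kneserLocalColoring, hleast.csInf_eq, Function.comp, capColor]
  split_ifs <;> omega

theorem kneserLocalColoring_isLocalColoring_general (n k : ℕ) (hk : 0 < k) (hnk : 2 * k ≤ n) :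
    IsLocalColoring (kneserGraph n k) (kneserLocalColoring n k) ∧
    IsStarFreeColoring (kneserGraph n k) (kneserLocalColoring n k) ∧
    (∀ A, kneserLocalColoring n k A ∈ Set.Icc 1 (2 * n - 4 * k + 2)) ∧
    (∃ A, kneserLocalColoring n k A = 2 * n - 4 * k + 2) ∧
    starFreeChromaticNumber (kneserGraph n k) ≤ localChromaticNumber (kneserGraph n k) ∧
    localChromaticNumber (kneserGraph n k) ≤ 2 * n - 4 * k + 2 := by
  have htop : 2 * (n - 2 * k) + 2 = 2 * n - 4 * k + 2 := by omega
  have hlocal : IsLocalColoring (kneserGraph n k) (kneserLocalColoring n k) := by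
    rw [kneserLocalColoring_eq_capColor_comp hk]
    exact isLocalColoring_capColor_comp (fun _ _ => kneserGraph.minElem_ne_of_adj hk)
      (fun _ _ => kneserGraph.minElem_le_or_le_of_adj hk)
      (fun _ _ _ => kneserGraph.minElem_lt_of_adj_of_adj hk)
  have hrange : ∀ A, kneserLocalColoring n k A ∈ Set.Icc 1 (2 * n - 4 * k + 2) := fun A => by
    rw [kneserLocalColoring_eq_capColor_comp hk, ← htop]
    exact capColor_mem_Icc _ _
  have hpos : 0 < 2 * n - 4 * k + 2 := by omega
  obtain ⟨A, hA⟩ := kneserGraph.exists_lt_minElem hk hnk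
  refine ⟨hlocal, hlocal.1, hrange, ⟨A, ?_⟩,
    starFreeChromaticNumber_le_localChromaticNumber hlocal hrange hpos,
    localChromaticNumber_le hlocal hrange hpos⟩
  rw [kneserLocalColoring_eq_capColor_comp hk, Function.comp_apply, capColor_of_lt hA, htop]

/-- For `n ≥ 2k ≥ 4`, the above coloring is a local coloring
(hence a star-free coloring) of `KG(n,k)` whose value is `2n − 4k + 2`;
consequently `χₛ(KG(n,k)) ≤ χₗ(KG(n,k)) ≤ 2n − 4k + 2`. -/
theorem kneserLocalColoring_isLocalColoring (n k : ℕ) (hk : 0 < k) (hn : 0 < n)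
    (h2k : 2 ≤ k) (hnk : 2 * k ≤ n) :
    IsLocalColoring (kneserGraph n k) (kneserLocalColoring n k) ∧
    IsStarFreeColoring (kneserGraph n k) (kneserLocalColoring n k) ∧
    (∀ A, kneserLocalColoring n k A ∈ Set.Icc 1 (2 * n - 4 * k + 2)) ∧
    (∃ A, kneserLocalColoring n k A = 2 * n - 4 * k + 2) ∧
    starFreeChromaticNumber (kneserGraph n k) ≤ localChromaticNumber (kneserGraph n k) ∧
    localChromaticNumber (kneserGraph n k) ≤ 2 * n - 4 * k + 2 :=
  kneserLocalColoring_isLocalColoring_general n k hk hnk
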